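/- Let m ≤ n, let f : ℝ^{m×n} → ℝ be any function, let ν, μ > 0, and let κ be a positive integer with κ ≤ m. Let 𝒳* denote the set of global minimizers of X ↦ ν f(X) + rank(X) over ℝ^{m×n} and Ω_κ = {X : rank(X) ≤ κ}, and suppose 𝒳* ∩ Ω_κ ≠ ∅. Then the set of global minimizers of Ψ(U,V) = ν f(UVᵀ) + (μ/4)‖UᵀU − VᵀV‖_F² + (1/2)(‖U‖_{2,0} + ‖V‖_{2,0}) over ℝ^{m×κ} × ℝ^{n×κ} equals 𝒲* = {(Ū,V̄) : ŪV̄ᵀ ∈ 𝒳* ∩ Ω_κ, ŪᵀŪ = V̄ᵀV̄, ‖Ū‖_{2,0} = ‖V̄‖_{2,0} = rank(ŪV̄ᵀ)}. -/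

import Mathlib

/-!
Write `F X = ν f X + rank X`. Since `rank (U Vᵀ) ≤ ‖U‖_{2,0}, ‖V‖_{2,0}` and the balancing
penalty is nonnegative, `Ψ(U, V) ≥ F (U Vᵀ)`, with equality exactly when `Uᵀ U = Vᵀ V` and
`‖U‖_{2,0} = ‖V‖_{2,0} = rank (U Vᵀ)`. Conversely every `X` of rank at most `κ` is `U Vᵀ` for
such a pair: with `Xᵀ X = P diag(λ) Pᵀ`, keep the eigenvectors of the `r = rank X` nonzero
eigenvalues and put `U = X P Λ^{-1/4}`, `V = P Λ^{1/4}`, so that `U Vᵀ = X` and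
`Uᵀ U = Λ^{1/2} = Vᵀ V`; then pad with `κ - r` zero columns. Hence `min Ψ = min F`, attained
exactly on `𝒲*`.
-/

open scoped BigOperators

noncomputable section

namespace Paper

open Matrix

/-- Euclidean dot product on `ℝ^p`. -/
def vdot {p : ℕ} (y z : Fin p → ℝ) : ℝ := ∑ i, y i * z i

/-- Euclidean norm on `ℝ^p`. -/
def vnorm {p : ℕ} (y : Fin p → ℝ) : ℝ := Real.sqrt (∑ i, (y i) ^ 2)

/-- Trace (Frobenius) inner product of matrices. -/
def finner {m n : ℕ} (X Y : Matrix (Fin m) (Fin n) ℝ) : ℝ := ∑ i, ∑ j, X i j * Y i j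

/-- Frobenius norm of a matrix. -/
def fnorm {m n : ℕ} (X : Matrix (Fin m) (Fin n) ℝ) : ℝ := Real.sqrt (∑ i, ∑ j, (X i j) ^ 2)

/-- Euclidean norm of the `j`-th column of a matrix. -/
def colNorm {m k : ℕ} (U : Matrix (Fin m) (Fin k) ℝ) (j : Fin k) : ℝ :=
  Real.sqrt (∑ i, (U i j) ^ 2)

/-- The `ℓ_{2,0}` norm of a matrix: the number of nonzero columns. -/
def l20 {m k : ℕ} (U : Matrix (Fin m) (Fin k) ℝ) : ℕ :=
  Set.ncard {j : Fin k | (fun i => U i j) ≠ 0}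

/-- Number of nonzero entries of a vector. -/
def zeroNorm {k : ℕ} (z : Fin k → ℝ) : ℕ := Set.ncard {i : Fin k | z i ≠ 0}

/-- `k`-restricted smallest eigenvalue of `A*A`. -/
def lamMin {m n p : ℕ} (A : Matrix (Fin m) (Fin n) ℝ →ₗ[ℝ] (Fin p → ℝ)) (k : ℕ) : ℝ :=
  sInf {t : ℝ | ∃ X : Matrix (Fin m) (Fin n) ℝ, X.rank ≤ k ∧ fnorm X = 1 ∧ t = (vnorm (A X)) ^ 2}

/-- `k`-restricted largest eigenvalue of `A*A`. -/
def lamMax {m n p : ℕ} (A : Matrix (Fin m) (Fin n) ℝ →ₗ[ℝ] (Fin p → ℝ)) (k : ℕ) : ℝ :=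
  sSup {t : ℝ | ∃ X : Matrix (Fin m) (Fin n) ℝ, X.rank ≤ k ∧ fnorm X = 1 ∧ t = (vnorm (A X)) ^ 2}

/-- Operator (spectral) norm of the sampling operator. -/
def opNorm {m n p : ℕ} (A : Matrix (Fin m) (Fin n) ℝ →ₗ[ℝ] (Fin p → ℝ)) : ℝ :=
  sSup {t : ℝ | ∃ X : Matrix (Fin m) (Fin n) ℝ, fnorm X = 1 ∧ t = vnorm (A X)}

/-- Spectral norm of a matrix. -/
def specNorm {a b : ℕ} (U : Matrix (Fin a) (Fin b) ℝ) : ℝ :=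
  sSup {t : ℝ | ∃ x : Fin b → ℝ, vnorm x = 1 ∧ t = vnorm (U.mulVec x)}

/-- Adjoint of `A` w.r.t. the trace inner product, applied to `y`. -/
def adjApply {m n p : ℕ} (A : Matrix (Fin m) (Fin n) ℝ →ₗ[ℝ] (Fin p → ℝ))
    (y : Fin p → ℝ) : Matrix (Fin m) (Fin n) ℝ :=
  fun i j => vdot (A (Matrix.single i j 1)) y

/-- `A*A` applied to a matrix. -/
def AstarA {m n p : ℕ} (A : Matrix (Fin m) (Fin n) ℝ →ₗ[ℝ] (Fin p → ℝ))
    (X : Matrix (Fin m) (Fin n) ℝ) : Matrix (Fin m) (Fin n) ℝ :=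
  adjApply A (A X)

/-- Singular values of `X` arranged nonincreasingly, `sigmaFin X 0` the largest. -/
def sigmaFin {m n : ℕ} (X : Matrix (Fin m) (Fin n) ℝ) : Fin m → ℝ := fun j =>
  Real.sqrt ((Matrix.isHermitian_mul_conjTranspose_self X).eigenvalues
    ((Tuple.sort (Matrix.isHermitian_mul_conjTranspose_self X).eigenvalues) j.rev))

/-- The `i`-th largest singular value (1-indexed); `0` for out-of-range indices. -/
def singularValue {m n : ℕ} (i : ℕ) (X : Matrix (Fin m) (Fin n) ℝ) : ℝ :=
  if h : 1 ≤ i ∧ i ≤ m then sigmaFin X ⟨i - 1, by omega⟩ else 0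

/-- The family `𝓛` of proper lsc convex functions `φ : ℝ → (−∞,∞]` with
`[0,1] ⊆ int(dom φ)`, `φ(1) = 1` and `min_{t ∈ [0,1]} φ(t) = 0` attained at `t*`. -/
structure LFamily where
  phi : ℝ → EReal
  lsc : LowerSemicontinuous phi
  convex : ∀ x y a b : ℝ, 0 ≤ a → 0 ≤ b → a + b = 1 →
    phi (a * x + b * y) ≤ (a : EReal) * phi x + (b : EReal) * phi y
  ne_bot : ∀ x, phi x ≠ ⊥
  icc_subset_interior_dom : Set.Icc (0 : ℝ) 1 ⊆ interior {t : ℝ | phi t ≠ ⊤}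
  phi_one : phi 1 = 1
  tstar : ℝ
  tstar_mem : tstar ∈ Set.Icc (0 : ℝ) 1
  phi_tstar : phi tstar = 0
  phi_nonneg : ∀ t ∈ Set.Icc (0 : ℝ) 1, 0 ≤ phi t

/-- Left derivative of `φ` at `1`, as the supremum of difference quotients. -/
def leftDerivOne (L : LFamily) : ℝ :=
  sSup {q : ℝ | ∃ t : ℝ, 0 ≤ t ∧ t < 1 ∧ q = (1 - (L.phi t).toReal) / (1 - t)}

/-- The function `ψ`: equal to `φ` on `[0,1]` and `+∞` elsewhere. -/
def psi (L : LFamily) (t : ℝ) : EReal := if t ∈ Set.Icc (0 : ℝ) 1 then L.phi t else ⊤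

/-- The conjugate `ψ*` of `ψ`. -/
def psiStar (L : LFamily) (s : ℝ) : EReal := ⨆ t : ℝ, ((s * t : ℝ) : EReal) - psi L t


/-- The objective `Ψ` of the `ℓ_{2,0}`-regularized balanced factorization. -/
def Psi {m n κ : ℕ} (f : Matrix (Fin m) (Fin n) ℝ → ℝ) (ν μ : ℝ)
    (U : Matrix (Fin m) (Fin κ) ℝ) (V : Matrix (Fin n) (Fin κ) ℝ) : ℝ :=
  ν * f (U * Vᵀ) + (μ / 4) * (fnorm (Uᵀ * U - Vᵀ * V)) ^ 2 +
    (1 / 2) * ((l20 U : ℝ) + (l20 V : ℝ))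

lemma submatrix_mul_transpose_submatrix_of_injective {α β ι κ R : Type*} [Fintype ι] [Fintype κ]
    [CommSemiring R] (M : Matrix α ι R) (N : Matrix β ι R) {e : κ → ι}
    (he : Function.Injective e) (hM : ∀ j ∉ Set.range e, ∀ i, M i j = 0) :
    M.submatrix id e * (N.submatrix id e)ᵀ = M * Nᵀ :=
  Matrix.ext fun i l => Fintype.sum_of_injective e he _ _
    (fun j hj => by simp [hM j hj i]) (fun _ => rfl)

lemma transpose_mul_self_apply_self_eq_zero_iff {α ι R : Type*} [Fintype α] [CommRing R]
    [LinearOrder R] [IsStrictOrderedRing R] (M : Matrix α ι R) (j : ι) :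
    (Mᵀ * M) j j = 0 ↔ (fun i => M i j) = 0 :=
  dotProduct_self_eq_zero

lemma rank_le_l20 {m k : ℕ} (U : Matrix (Fin m) (Fin k) ℝ) : U.rank ≤ l20 U := by
  classical
  set S : Set (Fin k) := {j | (fun i => U i j) ≠ 0}
  have hU := submatrix_mul_transpose_submatrix_of_injective U U Subtype.val_injective
    (e := ((↑) : S → Fin k)) (fun j hj i => congrFun (not_not.1 fun h => hj ⟨⟨j, h⟩, rfl⟩) i)
  calc U.rank = (U * Uᵀ).rank := (rank_self_mul_transpose U).symm
    _ ≤ (U.submatrix id ((↑) : S → Fin k)).rank := by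
        rw [← hU]; exact rank_mul_le_left _ _
    _ ≤ Fintype.card S := rank_le_card_width _
    _ = l20 U := by rw [l20, ← Nat.card_coe_set_eq, Nat.card_eq_fintype_card]

lemma l20_eq_of_transpose_mul_self_eq {m n k : ℕ} {U : Matrix (Fin m) (Fin k) ℝ}
    {V : Matrix (Fin n) (Fin k) ℝ} (h : Uᵀ * U = Vᵀ * V) : l20 U = l20 V := by
  simp only [l20, ne_eq, ← transpose_mul_self_apply_self_eq_zero_iff U,
    ← transpose_mul_self_apply_self_eq_zero_iff V, h]

lemma fnorm_eq_zero_iff {m n : ℕ} {X : Matrix (Fin m) (Fin n) ℝ} : fnorm X = 0 ↔ X = 0 := by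
  have hrow : ∀ i, 0 ≤ ∑ j, X i j ^ 2 := fun i => by positivity
  rw [fnorm, Real.sqrt_eq_zero (Fintype.sum_nonneg hrow), Fintype.sum_eq_zero_iff_of_nonneg hrow]
  simp only [funext_iff, Pi.zero_apply, ← Matrix.ext_iff, Matrix.zero_apply]
  refine forall_congr' fun i => ?_
  rw [Fintype.sum_eq_zero_iff_of_nonneg (f := fun j => X i j ^ 2) fun j => sq_nonneg _]
  simp [funext_iff]

lemma exists_orthogonal_diagonalizing_transpose_mul_self {m n : ℕ}
    (X : Matrix (Fin m) (Fin n) ℝ) :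
    ∃ (P : Matrix (Fin n) (Fin n) ℝ) (ev : Fin n → ℝ), Pᵀ * P = 1 ∧ P * Pᵀ = 1 ∧
      (X * P)ᵀ * (X * P) = diagonal ev ∧ Fintype.card {t // ev t ≠ 0} = X.rank := by
  have hH : (Xᵀ * X).IsHermitian := by
    simpa [conjTranspose_eq_transpose_of_trivial] using isHermitian_conjTranspose_mul_self X
  have h := hH.conjStarAlgAut_star_eigenvectorUnitary
  simp only [Unitary.conjStarAlgAut_apply, transpose_transpose, Unitary.coe_star,
    star_eq_conjTranspose, conjTranspose_eq_transpose_of_trivial, RCLike.ofReal_real_eq_id,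
    Function.id_comp] at h
  refine ⟨hH.eigenvectorUnitary, hH.eigenvalues, ?_, ?_, ?_, ?_⟩
  · simpa [star_eq_conjTranspose, conjTranspose_eq_transpose_of_trivial] using
      Unitary.coe_star_mul_self hH.eigenvectorUnitary
  · simpa [star_eq_conjTranspose, conjTranspose_eq_transpose_of_trivial] using
      Unitary.coe_mul_star_self hH.eigenvectorUnitary
  · rw [transpose_mul, ← h]
    simp only [Matrix.mul_assoc]
  · rw [← hH.rank_eq_card_non_zero_eigs, rank_transpose_mul_self]

theorem exists_balanced_rank_factorization {m n : ℕ} (X : Matrix (Fin m) (Fin n) ℝ) :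
    ∃ (U : Matrix (Fin m) (Fin X.rank) ℝ) (V : Matrix (Fin n) (Fin X.rank) ℝ),
      U * Vᵀ = X ∧ Uᵀ * U = Vᵀ * V := by
  obtain ⟨P, ev, hPP, hPP', hgram, hcard⟩ := exists_orthogonal_diagonalizing_transpose_mul_self X
  have hev : ∀ t, 0 ≤ ev t := fun t => by
    have h : 0 ≤ ((X * P)ᵀ * (X * P)) t t :=
      Fintype.sum_nonneg fun i => mul_self_nonneg ((X * P) i t)
    rwa [hgram, diagonal_apply_eq] at h
  obtain ⟨σ⟩ : Nonempty (Fin X.rank ≃ {t // ev t ≠ 0}) :=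
    ⟨(Fintype.equivFinOfCardEq hcard).symm⟩
  set e : Fin X.rank → Fin n := fun k => σ k
  have he : Function.Injective e := Subtype.val_injective.comp σ.injective
  have hXP : ∀ t ∉ Set.range e, ∀ i, (X * P) i t = 0 := fun t ht i => by
    have hev0 : ev t = 0 := not_not.1 fun h => ht ⟨σ.symm ⟨t, h⟩, by simp [e]⟩
    refine congrFun ((transpose_mul_self_apply_self_eq_zero_iff _ t).1 ?_) i
    rw [hgram, diagonal_apply_eq, hev0]
  set w : Fin X.rank → ℝ := fun k => √√(ev (e k))
  have hw : ∀ k, w k ≠ 0 := fun k =>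
    (Real.sqrt_pos.2 (Real.sqrt_pos.2 ((hev _).lt_of_ne (σ k).2.symm))).ne'
  have hw4 : ∀ k, ev (e k) = (w k * w k) * (w k * w k) := fun k => by
    simp only [w, Real.mul_self_sqrt (Real.sqrt_nonneg _), Real.mul_self_sqrt (hev _)]
  have hgram_sub : ∀ {a : ℕ} (A : Matrix (Fin a) (Fin n) ℝ),
      (A.submatrix id e)ᵀ * A.submatrix id e = (Aᵀ * A).submatrix e e := fun _ => rfl
  set D := diagonal w
  set D' := diagonal fun k => (w k)⁻¹
  refine ⟨(X * P).submatrix id e * D', P.submatrix id e * D, ?_, ?_⟩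
  · calc (X * P).submatrix id e * D' * (P.submatrix id e * D)ᵀ
        = (X * P).submatrix id e * (D' * D) * (P.submatrix id e)ᵀ := by
          simp only [D, transpose_mul, diagonal_transpose, Matrix.mul_assoc]
      _ = (X * P).submatrix id e * (P.submatrix id e)ᵀ := by
          rw [diagonal_mul_diagonal]; simp [hw]
      _ = X := by
          rw [submatrix_mul_transpose_submatrix_of_injective _ _ he hXP, Matrix.mul_assoc, hPP',
            Matrix.mul_one]
  · calc ((X * P).submatrix id e * D')ᵀ * ((X * P).submatrix id e * D')
        = D' * (((X * P).submatrix id e)ᵀ * (X * P).submatrix id e) * D' := by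
          simp only [D', transpose_mul, diagonal_transpose, Matrix.mul_assoc]
      _ = diagonal fun k => w k * w k := by
          rw [hgram_sub, hgram, submatrix_diagonal _ _ he, diagonal_mul_diagonal,
            diagonal_mul_diagonal]
          congr 1; funext k
          simp only [Function.comp_apply, hw4]
          field_simp [hw k]
      _ = (P.submatrix id e * D)ᵀ * (P.submatrix id e * D) := by
          rw [transpose_mul, diagonal_transpose, Matrix.mul_assoc,
            ← Matrix.mul_assoc _ (P.submatrix id e), hgram_sub, hPP, submatrix_one _ he,
            Matrix.one_mul, diagonal_mul_diagonal]

section Padding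

variable {α β ι κ R : Type*} [Fintype ι] [DecidableEq κ] [CommSemiring R] {e : ι → κ}

-- Column `s` of `U` becomes column `e s`; the remaining columns are zero.
def padCols (e : ι → κ) (U : Matrix α ι R) : Matrix α κ R :=
  U * (1 : Matrix κ κ R).submatrix e id

lemma padCols_mul_transpose_padCols [Fintype κ] [DecidableEq ι] (he : Function.Injective e)
    (U : Matrix α ι R) (V : Matrix β ι R) : padCols e U * (padCols e V)ᵀ = U * Vᵀ := by
  have hB : (1 : Matrix κ κ R).submatrix e id * ((1 : Matrix κ κ R).submatrix e id)ᵀ = 1 := by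
    rw [transpose_submatrix, transpose_one, ← submatrix_mul (1 : Matrix κ κ R) 1 e id e
      Function.bijective_id, Matrix.mul_one, submatrix_one _ he]
  simp only [padCols, transpose_mul, Matrix.mul_assoc]
  rw [← Matrix.mul_assoc ((1 : Matrix κ κ R).submatrix e id), hB, Matrix.one_mul]

lemma transpose_padCols_mul_padCols_eq [Fintype α] [Fintype β] {U : Matrix α ι R}
    {V : Matrix β ι R} (h : Uᵀ * U = Vᵀ * V) :
    (padCols e U)ᵀ * padCols e U = (padCols e V)ᵀ * padCols e V := by
  simp only [padCols, transpose_mul, Matrix.mul_assoc]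
  rw [← Matrix.mul_assoc Uᵀ, ← Matrix.mul_assoc Vᵀ, h]

end Padding

lemma l20_padCols_le {m r κ : ℕ} {e : Fin r → Fin κ} (he : Function.Injective e)
    (U : Matrix (Fin m) (Fin r) ℝ) : l20 (padCols e U) ≤ r := by
  have hsupp : {k | (fun i => padCols e U i k) ≠ 0} ⊆ Set.range e := fun k hk => by
    by_contra hke
    refine hk (funext fun i => ?_)
    rw [padCols, Matrix.mul_apply, Pi.zero_apply]
    exact Finset.sum_eq_zero fun s _ => by
      rw [submatrix_apply, id, one_apply_ne fun h => hke ⟨s, h⟩, mul_zero]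
  calc l20 (padCols e U) ≤ (Set.range e).ncard := Set.ncard_le_ncard hsupp
    _ = r := by rw [Set.ncard_range_of_injective he, Nat.card_fin]

lemma rank_mul_transpose_le_l20_left {m n k : ℕ} (U : Matrix (Fin m) (Fin k) ℝ)
    (V : Matrix (Fin n) (Fin k) ℝ) : (U * Vᵀ).rank ≤ l20 U :=
  (rank_mul_le_left U Vᵀ).trans (rank_le_l20 U)

lemma rank_mul_transpose_le_l20_right {m n k : ℕ} (U : Matrix (Fin m) (Fin k) ℝ)
    (V : Matrix (Fin n) (Fin k) ℝ) : (U * Vᵀ).rank ≤ l20 V :=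
  (rank_mul_le_right U Vᵀ).trans ((rank_transpose V).trans_le (rank_le_l20 V))

theorem exists_balanced_factorization_of_rank_le {m n κ : ℕ} (X : Matrix (Fin m) (Fin n) ℝ)
    (hX : X.rank ≤ κ) :
    ∃ (U : Matrix (Fin m) (Fin κ) ℝ) (V : Matrix (Fin n) (Fin κ) ℝ),
      U * Vᵀ = X ∧ Uᵀ * U = Vᵀ * V ∧ l20 U = X.rank ∧ l20 V = X.rank := by
  obtain ⟨U, V, hUV, hbal⟩ := exists_balanced_rank_factorization X
  have he := Fin.castLE_injective hX
  have hX' : padCols (Fin.castLE hX) U * (padCols (Fin.castLE hX) V)ᵀ = X := by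
    rw [padCols_mul_transpose_padCols he, hUV]
  have hbal' := transpose_padCols_mul_padCols_eq (e := Fin.castLE hX) hbal
  have hV : l20 (padCols (Fin.castLE hX) V) = X.rank :=
    le_antisymm (l20_padCols_le he V)
      ((congrArg rank hX').symm.trans_le (rank_mul_transpose_le_l20_right _ _))
  exact ⟨_, _, hX', hbal', (l20_eq_of_transpose_mul_self_eq hbal').trans hV, hV⟩

section Objective

variable {m n κ : ℕ} (f : Matrix (Fin m) (Fin n) ℝ → ℝ) (ν : ℝ) {μ : ℝ}
  (U : Matrix (Fin m) (Fin κ) ℝ) (V : Matrix (Fin n) (Fin κ) ℝ)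

lemma le_Psi (hμ : 0 ≤ μ) : ν * f (U * Vᵀ) + (U * Vᵀ).rank ≤ Psi f ν μ U V := by
  have hU : ((U * Vᵀ).rank : ℝ) ≤ l20 U := mod_cast rank_mul_transpose_le_l20_left U V
  have hV : ((U * Vᵀ).rank : ℝ) ≤ l20 V := mod_cast rank_mul_transpose_le_l20_right U V
  have hpen : 0 ≤ μ / 4 * fnorm (Uᵀ * U - Vᵀ * V) ^ 2 := by positivity
  rw [Psi]
  linarith

lemma Psi_eq_iff (hμ : 0 < μ) :
    Psi f ν μ U V = ν * f (U * Vᵀ) + (U * Vᵀ).rank ↔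
      Uᵀ * U = Vᵀ * V ∧ l20 U = (U * Vᵀ).rank ∧ l20 V = (U * Vᵀ).rank := by
  constructor
  · intro h
    have hU : ((U * Vᵀ).rank : ℝ) ≤ l20 U := mod_cast rank_mul_transpose_le_l20_left U V
    have hV : ((U * Vᵀ).rank : ℝ) ≤ l20 V := mod_cast rank_mul_transpose_le_l20_right U V
    have hpen : 0 ≤ μ / 4 * fnorm (Uᵀ * U - Vᵀ * V) ^ 2 := by positivity
    rw [Psi] at h
    have hU' : (l20 U : ℝ) = (U * Vᵀ).rank := by linarith
    have hV' : (l20 V : ℝ) = (U * Vᵀ).rank := by linarith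
    have hpen0 : μ / 4 * fnorm (Uᵀ * U - Vᵀ * V) ^ 2 = 0 := by linarith
    rw [mul_eq_zero, pow_eq_zero_iff two_ne_zero, fnorm_eq_zero_iff, sub_eq_zero] at hpen0
    exact ⟨hpen0.resolve_left (by positivity), mod_cast hU', mod_cast hV'⟩
  · rintro ⟨hbal, hU, hV⟩
    rw [Psi, hbal, sub_self, fnorm_eq_zero_iff.2 rfl, hU, hV]
    ring

end Objective

theorem global_min_set_of_Psi_general
    {m n : ℕ} (f : Matrix (Fin m) (Fin n) ℝ → ℝ) (ν μ : ℝ)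
    (hμ : 0 < μ) (κ : ℕ)
    (hne : ∃ X0 : Matrix (Fin m) (Fin n) ℝ,
      (∀ X : Matrix (Fin m) (Fin n) ℝ,
        ν * f X0 + (X0.rank : ℝ) ≤ ν * f X + (X.rank : ℝ)) ∧ X0.rank ≤ κ) :
    {q : Matrix (Fin m) (Fin κ) ℝ × Matrix (Fin n) (Fin κ) ℝ |
        ∀ (U : Matrix (Fin m) (Fin κ) ℝ) (V : Matrix (Fin n) (Fin κ) ℝ),
          Psi f ν μ q.1 q.2 ≤ Psi f ν μ U V} =
    {q : Matrix (Fin m) (Fin κ) ℝ × Matrix (Fin n) (Fin κ) ℝ |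
        (∀ X : Matrix (Fin m) (Fin n) ℝ,
          ν * f (q.1 * q.2ᵀ) + ((q.1 * q.2ᵀ).rank : ℝ) ≤ ν * f X + (X.rank : ℝ)) ∧
        (q.1 * q.2ᵀ).rank ≤ κ ∧ q.1ᵀ * q.1 = q.2ᵀ * q.2 ∧
        l20 q.1 = (q.1 * q.2ᵀ).rank ∧ l20 q.2 = (q.1 * q.2ᵀ).rank} := by
  obtain ⟨X₀, hX₀, hX₀κ⟩ := hne
  obtain ⟨U₀, V₀, rfl, hbal₀, hU₀, hV₀⟩ := exists_balanced_factorization_of_rank_le X₀ hX₀κ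
  have hPsi₀ := (Psi_eq_iff f ν U₀ V₀ hμ).2 ⟨hbal₀, hU₀, hV₀⟩
  ext ⟨U, V⟩
  constructor
  · intro hmin
    have hopt : ∀ X, Psi f ν μ U V ≤ ν * f X + X.rank :=
      fun X => (hmin U₀ V₀).trans (hPsi₀ ▸ hX₀ X)
    have hPsi := le_antisymm (hopt _) (le_Psi f ν U V hμ.le)
    exact ⟨fun X => hPsi ▸ hopt X, (rank_mul_le_left _ _).trans (rank_le_width U),
      (Psi_eq_iff f ν U V hμ).1 hPsi⟩
  · rintro ⟨hmin, -, hbal, hU, hV⟩ U' V'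
    rw [(Psi_eq_iff f ν U V hμ).2 ⟨hbal, hU, hV⟩]
    exact (hmin _).trans (le_Psi f ν U' V' hμ.le)

/-- the set of global minimizers of `Ψ` equals `𝒲*` (Lemma 3.2). -/
theorem global_min_set_of_Psi
    {m n : ℕ} (hmn : m ≤ n) (f : Matrix (Fin m) (Fin n) ℝ → ℝ) (ν μ : ℝ)
    (hν : 0 < ν) (hμ : 0 < μ) (κ : ℕ) (hκ : 1 ≤ κ) (hκm : κ ≤ m)
    (hne : ∃ X0 : Matrix (Fin m) (Fin n) ℝ,
      (∀ X : Matrix (Fin m) (Fin n) ℝ,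
        ν * f X0 + (X0.rank : ℝ) ≤ ν * f X + (X.rank : ℝ)) ∧ X0.rank ≤ κ) :
    {q : Matrix (Fin m) (Fin κ) ℝ × Matrix (Fin n) (Fin κ) ℝ |
        ∀ (U : Matrix (Fin m) (Fin κ) ℝ) (V : Matrix (Fin n) (Fin κ) ℝ),
          Psi f ν μ q.1 q.2 ≤ Psi f ν μ U V} =
    {q : Matrix (Fin m) (Fin κ) ℝ × Matrix (Fin n) (Fin κ) ℝ |
        (∀ X : Matrix (Fin m) (Fin n) ℝ,
          ν * f (q.1 * q.2ᵀ) + ((q.1 * q.2ᵀ).rank : ℝ) ≤ ν * f X + (X.rank : ℝ)) ∧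
        (q.1 * q.2ᵀ).rank ≤ κ ∧ q.1ᵀ * q.1 = q.2ᵀ * q.2 ∧
        l20 q.1 = (q.1 * q.2ᵀ).rank ∧ l20 q.2 = (q.1 * q.2ᵀ).rank} :=
  global_min_set_of_Psi_general f ν μ hμ κ hne

end Paper
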